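/- Let d ≥ 2 and let π₁, …, π_k be partitions of a set with d² elements that are pairwise complementary (πᵢ and πⱼ are complementary whenever i ≠ j). Then k ≤ d + 1. (There are at most d + 1 mutually complementary classical structures on a set with d² elements in Rel.) -/

import Mathlib

/-!
Two complementary partitions `π`, `τ` identify `X` with `π × τ`, and each part of `π` with
the set of parts of `τ`. With three of them, the part counts `p, q, r` satisfy
`pq = qr = pr = d²`, so every partition has `d` parts of size `d`. Through a fixed point `x`
the `k` parts containing `x` meet pairwise only in `x`, so they contribute `k (d - 1)`
distinct points besides `x`; hence `k (d - 1) ≤ d² - 1 = (d + 1)(d - 1)`.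
-/

def IsPartition {X : Type*} (π : Set (Set X)) : Prop :=
  (∀ S ∈ π, S.Nonempty) ∧ (∀ S ∈ π, ∀ T ∈ π, S ≠ T → Disjoint S T) ∧ ⋃₀ π = Set.univ

def Complementary {X : Type*} (π τ : Set (Set X)) : Prop :=
  ∀ S ∈ π, ∀ T ∈ τ, ∃! x, x ∈ S ∩ T

section Partitions

variable {X : Type*}

namespace IsPartition

variable {π : Set (Set X)}

lemma exists_mem (hπ : IsPartition π) (y : X) : ∃ S ∈ π, y ∈ S :=
  Set.mem_sUnion.mp (by rw [hπ.2.2]; exact Set.mem_univ y)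

lemma eq_of_mem (hπ : IsPartition π) {S T : Set X} (hS : S ∈ π) (hT : T ∈ π) {y : X}
    (hyS : y ∈ S) (hyT : y ∈ T) : S = T := by
  by_contra hne
  exact Set.disjoint_left.mp (hπ.2.1 S hS T hT hne) hyS hyT

noncomputable def part (hπ : IsPartition π) (y : X) : π :=
  ⟨(hπ.exists_mem y).choose, (hπ.exists_mem y).choose_spec.1⟩

lemma mem_part (hπ : IsPartition π) (y : X) : y ∈ (hπ.part y : Set X) :=
  (hπ.exists_mem y).choose_spec.2

lemma part_eq_of_mem (hπ : IsPartition π) {S : Set X} (hS : S ∈ π) {y : X} (hy : y ∈ S) :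
    (hπ.part y : Set X) = S :=
  hπ.eq_of_mem (hπ.part y).2 hS (hπ.mem_part y) hy

end IsPartition

namespace Complementary

variable {π τ : Set (Set X)}

lemma inter_subset_singleton (hc : Complementary π τ) {S T : Set X} (hS : S ∈ π)
    (hT : T ∈ τ) {x : X} (hxS : x ∈ S) (hxT : x ∈ T) : S ∩ T ⊆ {x} :=
  fun _ hy => (hc S hS T hT).unique hy ⟨hxS, hxT⟩

lemma ncard_eq_ncard_of_mem (hc : Complementary π τ) (hτ : IsPartition τ) {S : Set X}
    (hS : S ∈ π) : S.ncard = τ.ncard := by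
  refine Set.ncard_congr (fun y _ => (hτ.part y : Set X)) (fun y _ => (hτ.part y).2) ?_ ?_
  · intro y z hy hz hyz
    have hzy : z ∈ (hτ.part y : Set X) := hyz ▸ hτ.mem_part z
    exact (hc S hS _ (hτ.part y).2).unique ⟨hy, hτ.mem_part y⟩ ⟨hz, hzy⟩
  · intro T hT
    obtain ⟨y, ⟨hyS, hyT⟩, -⟩ := hc S hS T hT
    exact ⟨y, hyS, hτ.part_eq_of_mem hT hyT⟩

lemma bijective_part_prod_part (hc : Complementary π τ) (hπ : IsPartition π)
    (hτ : IsPartition τ) : Function.Bijective fun y => (hπ.part y, hτ.part y) := by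
  constructor
  · intro y z hyz
    obtain ⟨hπyz, hτyz⟩ := Prod.mk.inj hyz
    have hzπ : z ∈ (hπ.part y : Set X) := by rw [hπyz]; exact hπ.mem_part z
    have hzτ : z ∈ (hτ.part y : Set X) := by rw [hτyz]; exact hτ.mem_part z
    exact (hc _ (hπ.part y).2 _ (hτ.part y).2).unique
      ⟨hπ.mem_part y, hτ.mem_part y⟩ ⟨hzπ, hzτ⟩
  · rintro ⟨⟨S, hS⟩, ⟨T, hT⟩⟩
    obtain ⟨y, ⟨hyS, hyT⟩, -⟩ := hc S hS T hT
    exact ⟨y, Prod.ext (Subtype.ext (hπ.part_eq_of_mem hS hyS))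
      (Subtype.ext (hτ.part_eq_of_mem hT hyT))⟩

lemma ncard_mul_ncard (hc : Complementary π τ) (hπ : IsPartition π) (hτ : IsPartition τ) :
    π.ncard * τ.ncard = Nat.card X := by
  rw [Nat.card_eq_of_bijective _ (hc.bijective_part_prod_part hπ hτ), Nat.card_prod,
    Nat.card_coe_set_eq, Nat.card_coe_set_eq]

end Complementary

lemma sum_ncard_sub_one_le_of_pairwise_inter_subset_singleton [Finite X] {ι : Type*} [Fintype ι]
    {S : ι → Set X} {x : X}
    (hS : Pairwise fun i j => S i ∩ S j ⊆ {x}) :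
    ∑ i, ((S i).ncard - 1) ≤ Nat.card X - 1 := by
  have hdisj : Pairwise fun i j => Disjoint (S i \ {x}) (S j \ {x}) := fun i j hij =>
    Set.disjoint_left.mpr fun y hyi hyj => hyi.2 (hS hij ⟨hyi.1, hyj.1⟩)
  calc ∑ i, ((S i).ncard - 1) ≤ ∑ i, (S i \ {x}).ncard :=
        Finset.sum_le_sum fun i _ => Set.pred_ncard_le_ncard_sdiff_singleton (S i) x
    _ = (⋃ i, S i \ {x}).ncard := by
        rw [Set.ncard_iUnion_of_finite (fun _ => Set.toFinite _) hdisj,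
          finsum_eq_sum_of_fintype]
    _ ≤ ({x}ᶜ : Set X).ncard :=
        Set.ncard_le_ncard (Set.iUnion_subset fun i => Set.sdiff_subset_compl _ _)
    _ = Nat.card X - 1 := by rw [Set.ncard_compl, Set.ncard_singleton]

end Partitions

lemma Nat.eq_of_mul_eq_sq {a b c d : ℕ} (hd : 0 < d) (hab : a * b = d ^ 2)
    (hac : a * c = d ^ 2) (hbc : b * c = d ^ 2) : a = d := by
  have hsq : (a * d) ^ 2 = (d * d) ^ 2 :=
    calc (a * d) ^ 2 = (a * b) * (a * c) := by rw [mul_pow, ← hbc]; ring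
      _ = (d * d) ^ 2 := by rw [hab, hac]; ring
  exact Nat.eq_of_mul_eq_mul_right hd (Nat.pow_left_injective two_ne_zero hsq)

lemma exists_ne_ne_ne_of_two_lt_card {ι : Type*} [Fintype ι] (hι : 2 < Fintype.card ι)
    (i : ι) : ∃ a b, a ≠ i ∧ b ≠ i ∧ a ≠ b := by
  classical
  have hcard : 1 < (Finset.univ.erase i).card := by
    rw [Finset.card_erase_of_mem (Finset.mem_univ i), Finset.card_univ]; omega
  obtain ⟨a, ha, b, hb, hab⟩ := Finset.one_lt_card.mp hcard
  exact ⟨a, b, Finset.ne_of_mem_erase ha, Finset.ne_of_mem_erase hb, hab⟩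

/-- There are at most `d + 1` mutually complementary partitions (equivalently, mutually
complementary classical structures in `Rel`) on a set with `d²` elements, for `d ≥ 2`. -/
theorem mutually_complementary_partitions_le {d k : ℕ} (hd : 2 ≤ d)
    {X : Type*} [Fintype X] (hX : Fintype.card X = d ^ 2)
    (π : Fin k → Set (Set X))
    (hpart : ∀ i, IsPartition (π i))
    (hcomp : ∀ i j, i ≠ j → Complementary (π i) (π j)) :
    k ≤ d + 1 := by
  obtain hk | hk := le_or_gt k 2
  · omega
  have hcard : Nat.card X = d ^ 2 := by rwa [Nat.card_eq_fintype_card]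
  have hmul : ∀ i j, i ≠ j → (π i).ncard * (π j).ncard = d ^ 2 := fun i j hij =>
    hcard ▸ (hcomp i j hij).ncard_mul_ncard (hpart i) (hpart j)
  have hothers := exists_ne_ne_ne_of_two_lt_card (by rwa [Fintype.card_fin])
  have hn : ∀ i, (π i).ncard = d := fun i => by
    obtain ⟨a, b, hai, hbi, hab⟩ := hothers i
    exact Nat.eq_of_mul_eq_sq (by omega) (hmul i a hai.symm) (hmul i b hbi.symm) (hmul a b hab)
  obtain ⟨x⟩ : Nonempty X := Fintype.card_pos_iff.mp (by rw [hX]; positivity)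
  let S i : Set X := (hpart i).part x
  have hS : ∀ i, (S i).ncard = d := fun i => by
    obtain ⟨a, -, hai, -⟩ := hothers i
    rw [(hcomp i a hai.symm).ncard_eq_ncard_of_mem (hpart a) ((hpart i).part x).2, hn a]
  have hpoints := sum_ncard_sub_one_le_of_pairwise_inter_subset_singleton (S := S)
    fun i j hij => (hcomp i j hij).inter_subset_singleton ((hpart i).part x).2
      ((hpart j).part x).2 ((hpart i).mem_part x) ((hpart j).mem_part x)
  simp only [hS, Finset.sum_const, Finset.card_univ, Fintype.card_fin, smul_eq_mul,
    hcard] at hpoints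
  rw [← one_pow 2, Nat.sq_sub_sq] at hpoints
  exact Nat.le_of_mul_le_mul_right hpoints (by omega)
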